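/- In the recursive lower-bound universe, for every set T in H_i there exists an element of E_i contained in T and in no other set of H_i. -/
import Mathlib


/-- The element universe of the recursive lower-bound instance `I i`. -/
def Elem : ℕ → Type
  | 0 => PUnit
  | i + 1 => Fin 3 × Elem i

/-- The family of sets of the recursive lower-bound instance `I i`. -/
def Fam : (i : ℕ) → Set (Set (Elem i))
  | 0 => {Set.univ}
  | i + 1 =>
      {T | ∃ S ∈ Fam i,
        T = ((fun e => ((0 : Fin 3), e)) '' S) ∪ ((fun e => ((1 : Fin 3), e)) '' S)} ∪
      {T | ∃ S ∈ Fam i,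
        T = ((fun e => ((0 : Fin 3), e)) '' S) ∪ ((fun e => ((2 : Fin 3), e)) '' S)}

theorem stmt_17 (i : ℕ) (T : Set (Elem i)) (hT : T ∈ Fam i) :
    ∃ e ∈ T, ∀ T' ∈ Fam i, e ∈ T' → T' = T := by
  induction i with
  | zero =>
    simp only [Fam, Set.mem_singleton_iff] at hT
    subst hT
    exact ⟨PUnit.unit, trivial, fun T' hT' _ => by
      simpa only [Fam, Set.mem_singleton_iff] using hT'⟩
  | succ i ih =>
    rcases hT with ⟨S, hS, rfl⟩ | ⟨S, hS, rfl⟩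
    · obtain ⟨e, heS, hu⟩ := ih S hS
      refine ⟨(1, e), Or.inr ⟨e, heS, rfl⟩, ?_⟩
      rintro T' (⟨S', hS', rfl⟩ | ⟨S', hS', rfl⟩) hmem
      · have he' : e ∈ S' := by
          rcases hmem with ⟨x, hx, h⟩ | ⟨x, hx, h⟩
          · simp only [Prod.mk.injEq] at h; exact absurd h.1 (by decide)
          · simp only [Prod.mk.injEq] at h
            exact h.2 ▸ hx
        rw [hu S' hS' he']
      · exfalso
        rcases hmem with ⟨x, hx, h⟩ | ⟨x, hx, h⟩
        · simp only [Prod.mk.injEq] at h; exact absurd h.1 (by decide)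
        · simp only [Prod.mk.injEq] at h; exact absurd h.1 (by decide)
    · obtain ⟨e, heS, hu⟩ := ih S hS
      refine ⟨(2, e), Or.inr ⟨e, heS, rfl⟩, ?_⟩
      rintro T' (⟨S', hS', rfl⟩ | ⟨S', hS', rfl⟩) hmem
      · exfalso
        rcases hmem with ⟨x, hx, h⟩ | ⟨x, hx, h⟩
        · simp only [Prod.mk.injEq] at h; exact absurd h.1 (by decide)
        · simp only [Prod.mk.injEq] at h; exact absurd h.1 (by decide)
      · have he' : e ∈ S' := by
          rcases hmem with ⟨x, hx, h⟩ | ⟨x, hx, h⟩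
          · simp only [Prod.mk.injEq] at h; exact absurd h.1 (by decide)
          · simp only [Prod.mk.injEq] at h
            exact h.2 ▸ hx
        rw [hu S' hS' he']
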